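/- arXiv:0806.3245 — 5 statements merged into one kernel-verified Lean document; each statement's English description precedes it below -/
import Mathlib

section
/- Let n ≥ 3 be odd, let p₁,…,p_{n−1} be odd integers and p_n ≠ 0 an even integer, and let M be the symmetrized Seifert linking matrix of the pretzel knot P(p₁,…,p_n) as defined in the context. Then det M = −sign(p₁⋯p_{n−1}) · σ_{n−1}(p₁,…,p_n) = −sign(p₁⋯p_{n−1}) · Σ_{i=1}^{n} ∏_{j≠i} p_j. (Up to sign this is the determinant of the pretzel knot P(p₁,…,p_n).) -/
open Matrix Finset

/-- `esym p a b j` is the `j`-th elementary symmetric polynomial of the values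
`p a, p (a+1), …, p (b-1)`; in the 1-indexed notation of the paper, where `p i`
denotes `p_{i+1}`, this is `σ_j(p_{a+1},…,p_b)`. -/
def esym (p : ℕ → ℤ) (a b j : ℕ) : ℤ :=
  ∑ s ∈ (Finset.Ico a b).powersetCard j, ∏ i ∈ s, p i

/-- `sgn p i = s_{i+1} = -sign(p_{i+1})` in the 1-indexed notation of the paper. -/
def sgn (p : ℕ → ℤ) (i : ℕ) : ℤ := -(p i).sign

/-- Index type for the symmetrized Seifert linking matrix of the pretzel knot
`P(p₁,…,pₙ)` with `n` odd: pairs `(i,k)` with `1 ≤ i ≤ n−1`, `1 ≤ k ≤ |p_i|−1`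
(0-indexed here), together with the two extra indices `γ = Sum.inr 0` and
`δ = Sum.inr 1`.  Its cardinality is `N = ρ₁+⋯+ρ_{n−1}+2` where `ρ_i = |p_i|−1`. -/
abbrev PIdx (n : ℕ) (p : ℕ → ℤ) : Type :=
  (Σ i : Fin (n - 1), Fin ((p i).natAbs - 1)) ⊕ Fin 2

/-- Entries of the symmetrized Seifert linking matrix `M` of `P(p₁,…,pₙ)` (`n` odd):
`M[(i,k),(i,k)] = 2s_i`, `M[(i,k),(i,l)] = s_i` for `k ≠ l`, `M[(i,k),(j,l)] = 0` for
`i ≠ j`, `M[(i,k),γ] = M[γ,(i,k)] = s_i`, `M[(i,k),δ] = M[δ,(i,k)] = 0`,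
`M[γ,γ] = s₁+⋯+s_{n−1}`, `M[γ,δ] = M[δ,γ] = 1`, `M[δ,δ] = p_n`. -/
def linkMf (n : ℕ) (p : ℕ → ℤ) : PIdx n p → PIdx n p → ℤ
  | Sum.inl ⟨i, k⟩, Sum.inl ⟨j, l⟩ =>
      if (i : ℕ) = (j : ℕ) then (if (k : ℕ) = (l : ℕ) then 2 * sgn p i else sgn p i) else 0
  | Sum.inl ⟨i, _⟩, Sum.inr g => if g = 0 then sgn p i else 0
  | Sum.inr g, Sum.inl ⟨i, _⟩ => if g = 0 then sgn p i else 0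
  | Sum.inr g, Sum.inr g' =>
      if g = 0 then (if g' = 0 then ∑ i ∈ Finset.range (n - 1), sgn p i else 1)
      else (if g' = 0 then 1 else p (n - 1))

/-- The symmetrized Seifert linking matrix of the pretzel knot `P(p₁,…,pₙ)`, `n` odd. -/
def linkM (n : ℕ) (p : ℕ → ℤ) : Matrix (PIdx n p) (PIdx n p) ℤ :=
  Matrix.of (linkMf n p)

-- esym = erase-sum
lemma esym_eq (n : ℕ) (hn : 1 ≤ n) (p : ℕ → ℤ) :
    esym p 0 n (n - 1) = ∑ i ∈ Finset.range n, ∏ j ∈ (Finset.range n).erase i, p j := by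
  have hIco : Finset.Ico 0 n = Finset.range n := by
    rw [Finset.range_eq_Ico]
  have himg : (Finset.range n).powersetCard (n-1) =
      (Finset.range n).image (fun i => (Finset.range n).erase i) := by
    ext t
    simp only [Finset.mem_powersetCard, Finset.mem_image]
    constructor
    · rintro ⟨hsub, hcard⟩
      have hc1 : ((Finset.range n) \ t).card = 1 := by
        rw [Finset.card_sdiff_of_subset hsub, Finset.card_range, hcard]
        omega
      obtain ⟨i, hi⟩ := Finset.card_eq_one.mp hc1
      have hiR : i ∈ Finset.range n := by
        have : i ∈ (Finset.range n) \ t := hi ▸ Finset.mem_singleton_self i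
        exact (Finset.mem_sdiff.mp this).1
      have hit : i ∉ t := by
        have : i ∈ (Finset.range n) \ t := hi ▸ Finset.mem_singleton_self i
        exact (Finset.mem_sdiff.mp this).2
      refine ⟨i, hiR, ?_⟩
      apply (Finset.eq_of_subset_of_card_le (Finset.subset_erase.mpr ⟨hsub, hit⟩) ?_).symm
      rw [Finset.card_erase_of_mem hiR, Finset.card_range, hcard]
    · rintro ⟨i, hiR, rfl⟩
      exact ⟨Finset.erase_subset _ _, by rw [Finset.card_erase_of_mem hiR, Finset.card_range]⟩
  rw [esym, hIco, himg, Finset.sum_image]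
  intro i hi j hj h
  by_contra hij
  have : j ∈ (Finset.range n).erase i := Finset.mem_erase.mpr ⟨Ne.symm hij, hj⟩
  rw [show (Finset.range n).erase i = (Finset.range n).erase j from h] at this
  exact (Finset.notMem_erase j _) this


def Jm (m : ℕ) : Matrix (Fin m) (Fin m) ℚ := of fun _ _ => 1

lemma Jm_mul_Jm (m : ℕ) : Jm m * Jm m = (m : ℚ) • Jm m := by
  ext k l; simp [Jm, Matrix.mul_apply]

def dblk (s : ℚ) (m : ℕ) : Matrix (Fin m) (Fin m) ℚ := s • (1 + Jm m)
def dinv (s : ℚ) (m : ℕ) : Matrix (Fin m) (Fin m) ℚ := s • (1 - ((m : ℚ) + 1)⁻¹ • Jm m)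

lemma csum (m : ℕ) : ((m:ℚ)+1)⁻¹ + ((m:ℚ)+1)⁻¹ * m = 1 := by
  have hm : ((m : ℚ) + 1) ≠ 0 := by positivity
  field_simp
  ring

lemma one_add_Jm_mul (m : ℕ) :
    (1 + Jm m) * (1 - ((m : ℚ) + 1)⁻¹ • Jm m) = 1 := by
  set c : ℚ := ((m : ℚ) + 1)⁻¹ with hcdef
  rw [mul_sub, mul_one, Matrix.mul_smul, add_mul, one_mul, Jm_mul_Jm, smul_add,
    smul_smul, ← add_smul, csum, one_smul, add_sub_cancel_right]

lemma Jm_mul_one_sub (m : ℕ) :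
    (1 - ((m : ℚ) + 1)⁻¹ • Jm m) * (1 + Jm m) = 1 := by
  set c : ℚ := ((m : ℚ) + 1)⁻¹ with hcdef
  rw [sub_mul, one_mul, Matrix.smul_mul, mul_add, mul_one, Jm_mul_Jm, smul_add,
    smul_smul, ← add_smul, csum, one_smul, add_sub_cancel_right]

lemma dblk_mul_dinv (s : ℚ) (hs : s * s = 1) (m : ℕ) : dblk s m * dinv s m = 1 := by
  rw [dblk, dinv, Matrix.smul_mul, Matrix.mul_smul, smul_smul, hs, one_smul, one_add_Jm_mul]

lemma dinv_mul_dblk (s : ℚ) (hs : s * s = 1) (m : ℕ) : dinv s m * dblk s m = 1 := by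
  rw [dblk, dinv, Matrix.smul_mul, Matrix.mul_smul, smul_smul, hs, one_smul, Jm_mul_one_sub]

lemma det_dblk (s : ℚ) (m : ℕ) : (dblk s m).det = s ^ m * ((m : ℚ) + 1) := by
  rw [dblk, Matrix.det_smul]
  congr 1
  · simp
  have : (1 + Jm m) = 1 + replicateCol Unit (fun _ => (1:ℚ)) * replicateRow Unit (fun _ => (1:ℚ)) := by
    ext k l; simp [Jm, Matrix.mul_apply]
  rw [this, Matrix.det_one_add_replicateCol_mul_replicateRow]
  simp [dotProduct, add_comm]

-- entry lemmas
lemma dblk_apply (s : ℚ) (m : ℕ) (k l : Fin m) :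
    dblk s m k l = if (k:ℕ) = (l:ℕ) then 2 * s else s := by
  rcases eq_or_ne k l with h | h
  · subst h; simp [dblk, Jm]; ring
  · simp [dblk, Jm, Matrix.one_apply_ne h, Fin.val_eq_val, h]

lemma dinv_apply (s : ℚ) (m : ℕ) (k l : Fin m) :
    dinv s m k l = s * ((if k = l then 1 else 0) - ((m : ℚ) + 1)⁻¹) := by
  rcases eq_or_ne k l with h | h
  · subst h; simp [dinv, Jm]
  · simp [dinv, Jm, Matrix.one_apply_ne h, h]
  
lemma row_sum_dinv (s : ℚ) (m : ℕ) (l : Fin m) :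
    ∑ k : Fin m, dinv s m k l = s * ((m:ℚ)+1)⁻¹ := by
  simp only [dinv_apply, ← Finset.mul_sum]
  rw [Finset.sum_sub_distrib]
  simp [Finset.sum_ite_eq, mul_sub]
  have hm : ((m : ℚ) + 1) ≠ 0 := by positivity
  field_simp
  ring

lemma sum_dinv (s : ℚ) (m : ℕ) :
    ∑ k : Fin m, ∑ l : Fin m, dinv s m k l = s * (m : ℚ) * ((m:ℚ)+1)⁻¹ := by
  rw [show (∑ k : Fin m, ∑ l : Fin m, dinv s m k l) = ∑ l : Fin m, ∑ k : Fin m, dinv s m k l from Finset.sum_comm]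
  simp only [row_sum_dinv]
  rw [Finset.sum_const]
  simp [mul_comm, mul_assoc, mul_left_comm]


theorem my_det_blockDiagonal' {o : Type*} [Fintype o] [DecidableEq o] [LinearOrder o]
    {m' : o → Type*} [∀ i, Fintype (m' i)] [∀ i, DecidableEq (m' i)]
    (d : ∀ i, Matrix (m' i) (m' i) ℚ) :
    (blockDiagonal' d).det = ∏ k, (d k).det := by
  rw [(blockTriangular_blockDiagonal' d).det_fintype]
  refine Finset.prod_congr rfl fun k _ => ?_
  let e : m' k ≃ { a : Σ i, m' i // a.1 = k } :=
    { toFun := fun j => ⟨⟨k, j⟩, rfl⟩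
      invFun := fun a => cast (congrArg m' a.2) a.1.2
      left_inv := fun j => rfl
      right_inv := by rintro ⟨⟨i, j⟩, h⟩; subst h; rfl }
  rw [← Matrix.det_submatrix_equiv_self e]
  congr 1
  ext a b
  simp [e, Matrix.toSquareBlock_def, Matrix.blockDiagonal'_apply_eq]

lemma sigma_split (n : ℕ) (hn : 1 ≤ n) (p : ℕ → ℤ) :
    ∑ i ∈ range n, ∏ j ∈ (range n).erase i, p j
      = (∏ j ∈ range (n-1), p j)
        + ∑ i ∈ range (n-1), p (n-1) * ∏ j ∈ (range (n-1)).erase i, p j := by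
  obtain ⟨m, rfl⟩ : ∃ m, n = m + 1 := ⟨n-1, by omega⟩
  simp only [Nat.add_sub_cancel]
  rw [Finset.sum_range_succ]
  have h1 : (range (m+1)).erase m = range m := by
    rw [Finset.range_add_one, Finset.erase_insert (by simp)]
  rw [h1, add_comm]
  congr 1
  refine Finset.sum_congr rfl fun i hi => ?_
  have him : i < m := Finset.mem_range.mp hi
  have h2 : (range (m+1)).erase i = insert m ((range m).erase i) := by
    rw [Finset.range_add_one, Finset.erase_insert_of_ne (by omega)]
  rw [h2, Finset.prod_insert (by simp)]

lemma final_scalar (n : ℕ) (hn : 3 ≤ n) (p : ℕ → ℤ)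
    (hne : ∀ i, i < n - 1 → p i ≠ 0) :
    (∏ i ∈ range (n-1), ((p i).natAbs : ℚ)) *
      ((∑ i ∈ range (n-1), -((p i : ℚ))⁻¹) * ((p (n-1) : ℤ) : ℚ) - 1)
    = -(((∏ i ∈ range (n-1), p i).sign : ℤ) : ℚ) *
        ((∑ i ∈ range n, ∏ j ∈ (range n).erase i, p j : ℤ) : ℚ) := by
  set P : ℤ := ∏ i ∈ range (n-1), p i with hP
  have hPne : P ≠ 0 := Finset.prod_ne_zero_iff.mpr fun i hi => hne i (Finset.mem_range.mp hi)
  have hsgn : P.sign = 1 ∨ P.sign = -1 := by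
    rcases Int.lt_or_lt_of_ne hPne with h' | h'
    · right; exact Int.sign_eq_neg_one_of_neg h'
    · left; exact Int.sign_eq_one_of_pos h'
  have hss : ((P.sign : ℤ) : ℚ) * ((P.sign : ℤ) : ℚ) = 1 := by
    rcases hsgn with h | h <;> rw [h] <;> norm_num
  have hsne : ((P.sign : ℤ) : ℚ) ≠ 0 := by
    rcases hsgn with h | h <;> rw [h] <;> norm_num
  have habs : (∏ i ∈ range (n-1), ((p i).natAbs : ℤ)) = |P| := by
    rw [hP, Finset.abs_prod]
    exact Finset.prod_congr rfl fun i _ => (Int.abs_eq_natAbs _).symm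
  have habs2 : |P| = P.sign * P := by
    have := Int.sign_mul_abs P
    rcases hsgn with h | h <;> rw [h] at this ⊢ <;> omega
  have hA : (∏ i ∈ range (n-1), ((p i).natAbs : ℚ)) = ((P.sign : ℤ) : ℚ) * (P : ℚ) := by
    have h := habs.trans habs2
    calc (∏ i ∈ range (n-1), ((p i).natAbs : ℚ))
        = ((∏ i ∈ range (n-1), ((p i).natAbs : ℤ)) : ℚ) := by norm_cast
      _ = _ := by exact_mod_cast congrArg (Int.cast : ℤ → ℚ) h
  -- reduce to the sign-free identity
  rw [hA, mul_assoc, neg_mul]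
  rw [show ∀ a : ℚ, -(((P.sign : ℤ):ℚ) * a) = ((P.sign : ℤ):ℚ) * (-a) from fun a => by ring]
  congr 1
  have hsum : (P:ℚ) * (∑ i ∈ range (n-1), -((p i : ℚ))⁻¹)
      = -∑ i ∈ range (n-1), ∏ j ∈ (range (n-1)).erase i, (p j : ℚ) := by
    rw [Finset.mul_sum, ← Finset.sum_neg_distrib]
    refine Finset.sum_congr rfl fun i hi => ?_
    have hpi : (p i : ℚ) ≠ 0 := Int.cast_ne_zero.mpr (hne i (Finset.mem_range.mp hi))
    have hme : (p i : ℚ) * ∏ j ∈ (range (n-1)).erase i, (p j : ℚ) = (P : ℚ) := by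
      rw [hP, Int.cast_prod]
      exact Finset.mul_prod_erase (range (n-1)) (fun j => ((p j : ℤ) : ℚ)) hi
    rw [← hme]
    field_simp
  have hPQ : ((P : ℤ) : ℚ) = ∏ i ∈ range (n-1), ((p i : ℤ) : ℚ) := by
    rw [hP, Int.cast_prod]
  rw [sigma_split n (by omega) p]
  push_cast
  rw [← Finset.mul_sum, ← hPQ]
  have hsum2 : ∀ i ∈ range (n-1),
      (∏ j ∈ (range (n-1)).erase i, ((p j : ℤ) : ℚ)) =
        ∏ j ∈ (range (n-1)).erase i, ((p j : ℤ) : ℚ) := fun _ _ => rfl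
  linear_combination ((p (n-1) : ℚ)) * hsum

def qs (p : ℕ → ℤ) (i : ℕ) : ℚ := ((sgn p i : ℤ) : ℚ)

noncomputable def AA (n : ℕ) (p : ℕ → ℤ) :
    Matrix (Σ i : Fin (n - 1), Fin ((p i).natAbs - 1)) (Σ i : Fin (n - 1), Fin ((p i).natAbs - 1)) ℚ :=
  blockDiagonal' fun i => dblk (qs p i) ((p (i : ℕ)).natAbs - 1)

noncomputable def AI (n : ℕ) (p : ℕ → ℤ) :
    Matrix (Σ i : Fin (n - 1), Fin ((p i).natAbs - 1)) (Σ i : Fin (n - 1), Fin ((p i).natAbs - 1)) ℚ :=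
  blockDiagonal' fun i => dinv (qs p i) ((p (i : ℕ)).natAbs - 1)

def BB (n : ℕ) (p : ℕ → ℤ) :
    Matrix (Σ i : Fin (n - 1), Fin ((p i).natAbs - 1)) (Fin 2) ℚ :=
  of fun x g => if g = 0 then qs p x.1 else 0

def CC (n : ℕ) (p : ℕ → ℤ) :
    Matrix (Fin 2) (Σ i : Fin (n - 1), Fin ((p i).natAbs - 1)) ℚ :=
  of fun g x => if g = 0 then qs p x.1 else 0

noncomputable def DD (n : ℕ) (p : ℕ → ℤ) : Matrix (Fin 2) (Fin 2) ℚ :=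
  !![∑ i ∈ Finset.range (n - 1), qs p i, 1; 1, ((p (n - 1) : ℤ) : ℚ)]

lemma map_eq (n : ℕ) (p : ℕ → ℤ) :
    (linkM n p).map (Int.cast : ℤ → ℚ) = fromBlocks (AA n p) (BB n p) (CC n p) (DD n p) := by
  ext x y
  cases x with
  | inl a =>
    rcases a with ⟨i, k⟩
    cases y with
    | inl b =>
      rcases b with ⟨j, l⟩
      show ((linkMf n p (Sum.inl ⟨i, k⟩) (Sum.inl ⟨j, l⟩) : ℤ) : ℚ) = AA n p ⟨i, k⟩ ⟨j, l⟩
      rcases eq_or_ne i j with rfl | hij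
      · rw [AA, blockDiagonal'_apply_eq, dblk_apply]
        simp only [linkMf, if_pos rfl]
        split_ifs <;> push_cast [qs] <;> ring
      · rw [AA, blockDiagonal'_apply_ne _ _ _ hij]
        have : (i : ℕ) ≠ (j : ℕ) := fun h => hij (Fin.ext h)
        simp [linkMf, this]
    | inr g =>
      show ((linkMf n p (Sum.inl ⟨i, k⟩) (Sum.inr g) : ℤ) : ℚ) = BB n p ⟨i, k⟩ g
      simp only [linkMf, BB, of_apply, qs]
      split_ifs <;> push_cast <;> rfl
  | inr g =>
    cases y with
    | inl b =>
      rcases b with ⟨j, l⟩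
      show ((linkMf n p (Sum.inr g) (Sum.inl ⟨j, l⟩) : ℤ) : ℚ) = CC n p g ⟨j, l⟩
      simp only [linkMf, CC, of_apply, qs]
      split_ifs <;> push_cast <;> rfl
    | inr g' =>
      show ((linkMf n p (Sum.inr g) (Sum.inr g') : ℤ) : ℚ) = DD n p g g'
      fin_cases g <;> fin_cases g' <;>
        simp [linkMf, DD, qs] <;> push_cast <;> rfl

section main
variable (n : ℕ) (p : ℕ → ℤ)

lemma qs_sq (i : ℕ) (h : p i ≠ 0) : qs p i * qs p i = 1 := by
  have : (p i).sign = 1 ∨ (p i).sign = -1 := by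
    rcases Int.lt_or_lt_of_ne h with h' | h'
    · right; exact Int.sign_eq_neg_one_of_neg h'
    · left; exact Int.sign_eq_one_of_pos h'
  rcases this with h' | h' <;> simp [qs, sgn, h']

lemma CC_mul_AI (hne : ∀ i, i < n - 1 → p i ≠ 0) :
    CC n p * AI n p = of (fun g y =>
      if g = 0 then ((((p (y.1 : ℕ)).natAbs - 1 : ℕ) : ℚ) + 1)⁻¹ else 0) := by
  ext g y
  rcases y with ⟨j, l⟩
  rw [Matrix.mul_apply, ← Finset.univ_sigma_univ, Finset.sum_sigma]
  by_cases hg : g = 0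
  · subst hg
    simp only [CC, of_apply, if_pos rfl]
    rw [Finset.sum_eq_single j]
    · have hj : p (j : ℕ) ≠ 0 := hne _ j.2
      simp only [AI, blockDiagonal'_apply_eq, of_apply, eq_self_iff_true, if_true]
      rw [← Finset.mul_sum, row_sum_dinv, ← mul_assoc, qs_sq p _ hj, one_mul]
    · intro i _ hij
      have : ∀ k : Fin ((p (i : ℕ)).natAbs - 1),
          AI n p ⟨i, k⟩ ⟨j, l⟩ = 0 := fun k => blockDiagonal'_apply_ne _ _ _ hij
      simp [this]
    · simp
  · simp [CC, hg]

lemma CAB (hne : ∀ i, i < n - 1 → p i ≠ 0) :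
    CC n p * AI n p * BB n p =
      !![∑ j : Fin (n-1), (((p (j : ℕ)).natAbs - 1 : ℕ) : ℚ) *
          (((((p (j : ℕ)).natAbs - 1 : ℕ) : ℚ) + 1)⁻¹ * qs p (j : ℕ)), 0; 0, 0] := by
  rw [CC_mul_AI n p hne]
  ext g g'
  rw [Matrix.mul_apply, ← Finset.univ_sigma_univ, Finset.sum_sigma]
  by_cases hg : g = 0
  · subst hg
    by_cases hg' : g' = 0
    · subst hg'
      simp only [of_apply, eq_self_iff_true, if_true, BB, Matrix.cons_val', Matrix.cons_val_zero,
        Matrix.empty_val', Matrix.cons_val_fin_one, Matrix.head_cons, Matrix.head_fin_const]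
      refine Finset.sum_congr rfl fun j _ => ?_
      rw [Finset.sum_const]
      simp [Finset.card_univ, mul_assoc]
    · have h1 : g' = 1 := by omega
      subst h1
      simp [BB]
  · have h1 : g = 1 := by omega
    subst h1
    fin_cases g' <;> simp
end main

section main2
variable (n : ℕ) (p : ℕ → ℤ)

lemma qs_c (i : ℕ) (h : p i ≠ 0) :
    qs p i - (((p i).natAbs - 1 : ℕ) : ℚ) * ((((p i).natAbs - 1 : ℕ) : ℚ) + 1)⁻¹ * qs p i
      = -((p i : ℚ))⁻¹ := by
  have hpos : 1 ≤ (p i).natAbs := Int.natAbs_pos.mpr h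
  have hA1 : (((p i).natAbs - 1 : ℕ) : ℚ) = ((p i).natAbs : ℚ) - 1 := by
    push_cast [hpos]; ring
  have hZ : (p i).sign * p i = ((p i).natAbs : ℤ) := by
    rcases Int.lt_or_lt_of_ne h with h' | h'
    · rw [Int.sign_eq_neg_one_of_neg h']
      have := Int.natAbs_of_nonneg (neg_nonneg.mpr h'.le)
      omega
    · rw [Int.sign_eq_one_of_pos h']
      have := Int.natAbs_of_nonneg h'.le
      omega
  have hq : qs p i * (p i : ℚ) = -((p i).natAbs : ℚ) := by
    have h2 : (sgn p i) * p i = -(((p i).natAbs : ℤ)) := by rw [sgn, neg_mul, hZ]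
    calc qs p i * (p i : ℚ) = (((sgn p i) * p i : ℤ) : ℚ) := by rw [qs]; push_cast; ring
      _ = _ := by rw [h2, Int.cast_neg, Int.cast_natCast]
  have hA0 : ((p i).natAbs : ℚ) ≠ 0 := (Nat.cast_pos.mpr hpos).ne'
  have hp0 : (p i : ℚ) ≠ 0 := Int.cast_ne_zero.mpr h
  rw [hA1]
  have hq' : qs p i = -((p i).natAbs : ℚ) / (p i : ℚ) := by
    rw [eq_div_iff hp0]; exact hq
  rw [hq', sub_add_cancel, div_eq_mul_inv]
  linear_combination (((p i).natAbs : ℚ) - 1) * ((p i : ℚ))⁻¹ * mul_inv_cancel₀ hA0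

lemma detQ (hn : 3 ≤ n) (hne : ∀ i, i < n - 1 → p i ≠ 0)
    (heven : ∀ i, i < n - 1 → Even ((p i).natAbs - 1)) :
    (((linkM n p).det : ℤ) : ℚ)
      = (∏ i ∈ Finset.range (n-1), ((p i).natAbs : ℚ)) *
        ((∑ i ∈ Finset.range (n-1), -((p i : ℚ))⁻¹) * ((p (n-1) : ℤ) : ℚ) - 1) := by
  have hdet : (((linkM n p).det : ℤ) : ℚ) = ((linkM n p).map (Int.cast : ℤ → ℚ)).det := by
    have h := RingHom.map_det (Int.castRingHom ℚ) (linkM n p)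
    simpa using h
  have hAIAA : AI n p * AA n p = 1 := by
    rw [AI, AA, ← blockDiagonal'_mul]
    have h1 : (fun (i : Fin (n-1)) => dinv (qs p (i:ℕ)) ((p (i:ℕ)).natAbs - 1)
        * dblk (qs p (i:ℕ)) ((p (i:ℕ)).natAbs - 1))
        = (1 : ∀ i : Fin (n-1), Matrix (Fin ((p (i:ℕ)).natAbs - 1)) (Fin ((p (i:ℕ)).natAbs - 1)) ℚ) :=
      funext fun i => dinv_mul_dblk _ (qs_sq p _ (hne _ i.2)) _
    rw [h1, blockDiagonal'_one]
  have hAAAI : AA n p * AI n p = 1 := by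
    rw [AI, AA, ← blockDiagonal'_mul]
    have h1 : (fun (i : Fin (n-1)) => dblk (qs p (i:ℕ)) ((p (i:ℕ)).natAbs - 1)
        * dinv (qs p (i:ℕ)) ((p (i:ℕ)).natAbs - 1))
        = (1 : ∀ i : Fin (n-1), Matrix (Fin ((p (i:ℕ)).natAbs - 1)) (Fin ((p (i:ℕ)).natAbs - 1)) ℚ) :=
      funext fun i => dblk_mul_dinv _ (qs_sq p _ (hne _ i.2)) _
    rw [h1, blockDiagonal'_one]
  letI instInv : Invertible (AA n p) := ⟨AI n p, hAIAA, hAAAI⟩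
  have hinv : ⅟(AA n p) = AI n p := rfl
  rw [hdet, map_eq, det_fromBlocks₁₁, hinv, CAB n p hne]
  -- determinant of AA
  have hdetA : (AA n p).det = ∏ i ∈ Finset.range (n-1), ((p i).natAbs : ℚ) := by
    rw [AA, my_det_blockDiagonal']
    rw [← Fin.prod_univ_eq_prod_range (fun i => ((p i).natAbs : ℚ)) (n-1)]
    refine Finset.prod_congr rfl fun i _ => ?_
    rw [det_dblk]
    have h2 : qs p (i:ℕ) ^ ((p (i:ℕ)).natAbs - 1) = 1 := by
      rcases mul_self_eq_one_iff.mp (qs_sq p _ (hne _ i.2)) with h' | h'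
      · rw [h', one_pow]
      · rw [h', (heven _ i.2).neg_one_pow]
    have h3 : (((p (i:ℕ)).natAbs - 1 : ℕ) : ℚ) + 1 = ((p (i:ℕ)).natAbs : ℚ) := by
      have : 1 ≤ (p (i:ℕ)).natAbs := Int.natAbs_pos.mpr (hne _ i.2)
      push_cast [this]; ring
    rw [h2, h3, one_mul]
  rw [hdetA]
  congr 1
  -- Schur complement determinant
  set t0 : ℚ := ∑ j : Fin (n-1), (((p (j : ℕ)).natAbs - 1 : ℕ) : ℚ) *
      (((((p (j : ℕ)).natAbs - 1 : ℕ) : ℚ) + 1)⁻¹ * qs p (j : ℕ)) with ht0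
  rw [Matrix.det_fin_two]
  have e00 : (DD n p - !![t0,0;0,0]) 0 0 = (∑ i ∈ Finset.range (n-1), qs p i) - t0 := by
    simp [DD]
  have e01 : (DD n p - !![t0,0;0,0]) 0 1 = 1 := by simp [DD]
  have e10 : (DD n p - !![t0,0;0,0]) 1 0 = 1 := by simp [DD]
  have e11 : (DD n p - !![t0,0;0,0]) 1 1 = ((p (n-1) : ℤ) : ℚ) := by simp [DD]
  rw [e00, e01, e10, e11]
  have hsum : (∑ i ∈ Finset.range (n-1), qs p i) - t0
      = ∑ i ∈ Finset.range (n-1), -((p i : ℚ))⁻¹ := by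
    rw [ht0, Fin.sum_univ_eq_sum_range (fun j => (((p j).natAbs - 1 : ℕ) : ℚ) *
      (((((p j).natAbs - 1 : ℕ) : ℚ) + 1)⁻¹ * qs p j)) (n-1), ← Finset.sum_sub_distrib]
    refine Finset.sum_congr rfl fun i hi => ?_
    have h := qs_c p i (hne i (Finset.mem_range.mp hi))
    linear_combination h
  rw [hsum]
  ring
end main2


theorem stmt10_aux (n : ℕ) (hn : 3 ≤ n) (hodd : Odd n) (p : ℕ → ℤ)
    (hpodd : ∀ i, i < n - 1 → Odd (p i)) :
    (linkM n p).det = -(∏ i ∈ Finset.range (n - 1), p i).sign *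
        ∑ i ∈ Finset.range n, ∏ j ∈ (Finset.range n).erase i, p j := by
  have hne : ∀ i, i < n - 1 → p i ≠ 0 := by
    intro i hi h0
    have := hpodd i hi
    rw [h0] at this
    exact (Int.not_odd_iff_even.mpr Even.zero) this
  have heven : ∀ i, i < n - 1 → Even ((p i).natAbs - 1) := by
    intro i hi
    obtain ⟨k, hk⟩ := Int.natAbs_odd.mpr (hpodd i hi)
    exact ⟨k, by omega⟩
  have hQ := detQ n p hn hne heven
  rw [final_scalar n hn p hne] at hQ
  have : (((linkM n p).det : ℤ) : ℚ) = (((-(∏ i ∈ Finset.range (n - 1), p i).sign *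
      ∑ i ∈ Finset.range n, ∏ j ∈ (Finset.range n).erase i, p j) : ℤ) : ℚ) := by
    push_cast
    convert hQ using 2
    all_goals norm_cast
  exact_mod_cast this

/-- `det M = −sign(p₁⋯p_{n−1})·σ_{n−1}(p₁,…,pₙ)
           = −sign(p₁⋯p_{n−1})·Σ_{i=1}^{n} ∏_{j≠i} p_j`. -/
theorem stmt10 (n : ℕ) (hn : 3 ≤ n) (hodd : Odd n) (p : ℕ → ℤ)
    (hpodd : ∀ i, i < n - 1 → Odd (p i)) (hpeven : Even (p (n - 1)))
    (hpne : p (n - 1) ≠ 0) :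
    (linkM n p).det = -(∏ i ∈ Finset.range (n - 1), p i).sign * esym p 0 n (n - 1) ∧
      (linkM n p).det = -(∏ i ∈ Finset.range (n - 1), p i).sign *
        ∑ i ∈ Finset.range n, ∏ j ∈ (Finset.range n).erase i, p j := by
  have key := stmt10_aux n hn hodd p hpodd
  refine ⟨?_, key⟩
  rw [esym_eq n (by omega) p]
  exact key
end

section
/- Let n ≥ 3 be odd, let p₁,…,p_{n−1} be odd integers and p_n ≠ 0 an even integer, and let M be the symmetrized Seifert linking matrix of the pretzel knot P(p₁,…,p_n) as defined in the context. Let M′ be the (N−1)×(N−1) matrix obtained from M by deleting the row and column indexed by δ. Then det M′ = −sign(p₁⋯p_{n−1}) · σ_{n−2}(p₁,…,p_{n−1}) = −sign(p₁⋯p_{n−1}) · Σ_{i=1}^{n−1} ∏_{j≤n−1, j≠i} p_j. (Up to sign this is the determinant of the two-component pretzel link P(p₁,…,p_{n−1}).) -/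
open Matrix

/-- The inclusion of indices deleting `δ`: every index other than `δ` is kept. -/
def delδ (n : ℕ) (p : ℕ → ℤ) :
    (Σ i : Fin (n - 1), Fin ((p i).natAbs - 1)) ⊕ Unit → PIdx n p :=
  Sum.elim Sum.inl fun _ => Sum.inr 0

/-! ### Auxiliary material -/

section Aux

open Finset

theorem det_blockDiag {o : Type*} [Fintype o] [DecidableEq o] [LinearOrder o]
    {m : o → Type*} [∀ i, Fintype (m i)] [∀ i, DecidableEq (m i)] {R : Type*} [CommRing R]
    (d : ∀ i, Matrix (m i) (m i) R) :
    (blockDiagonal' d).det = ∏ i, (d i).det := by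
  rw [(blockTriangular_blockDiagonal' d).det_fintype]
  refine Finset.prod_congr rfl fun i _ => ?_
  let e : m i ≃ { a : Σ j, m j // a.1 = i } :=
    { toFun := fun k => ⟨⟨i, k⟩, rfl⟩
      invFun := fun x => cast (congrArg m x.2) x.1.2
      left_inv := fun k => rfl
      right_inv := fun x => by
        rcases x with ⟨⟨j, k⟩, h⟩
        subst h; rfl }
  rw [← Matrix.det_submatrix_equiv_self e]
  congr 1
  ext k l
  simp [e, Matrix.toSquareBlock, Matrix.toSquareBlockProp, blockDiagonal'_apply]

theorem int_sign_cases (a : ℤ) (ha : a ≠ 0) : a.sign = 1 ∨ a.sign = -1 := by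
  rcases lt_trichotomy a 0 with h | h | h
  · exact Or.inr (Int.sign_eq_neg_one_iff_neg.mpr h)
  · exact absurd h ha
  · exact Or.inl (Int.sign_eq_one_iff_pos.mpr h)

theorem sign_sq (a : ℤ) (ha : a ≠ 0) : ((a.sign : ℚ)) * ((a.sign : ℚ)) = 1 := by
  rcases int_sign_cases a ha with h | h <;> rw [h] <;> norm_num

theorem natAbs_eq_sign_mul (a : ℤ) : ((a.natAbs : ℚ)) = (a.sign : ℚ) * (a : ℚ) := by
  rw [Nat.cast_natAbs]
  rcases lt_trichotomy a 0 with h | h | h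
  · rw [Int.sign_eq_neg_one_iff_neg.mpr h, abs_of_neg h]
    push_cast; ring
  · simp [h]
  · rw [Int.sign_eq_one_iff_pos.mpr h, abs_of_pos h]
    push_cast; ring

theorem sum_powersetCard_pred {t : Finset ℕ} (ht : t.Nonempty) (p : ℕ → ℤ) :
    ∑ s ∈ t.powersetCard (t.card - 1), ∏ i ∈ s, p i = ∑ i ∈ t, ∏ j ∈ t.erase i, p j := by
  symm
  refine Finset.sum_bij (fun a _ => t.erase a) ?_ ?_ ?_ ?_
  · intro a ha
    rw [Finset.mem_powersetCard]
    exact ⟨Finset.erase_subset _ _, Finset.card_erase_of_mem ha⟩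
  · intro a ha b hb h
    by_contra hne
    have h2 : a ∈ t.erase b := Finset.mem_erase.mpr ⟨hne, ha⟩
    rw [← h] at h2
    exact (Finset.notMem_erase a t) h2
  · intro s hs
    rw [Finset.mem_powersetCard] at hs
    obtain ⟨hsub, hcard⟩ := hs
    have hss : s ⊂ t := by
      refine Finset.ssubset_iff_subset_ne.mpr ⟨hsub, ?_⟩
      intro h
      have h2 := Finset.card_pos.mpr ht
      rw [h] at hcard
      omega
    obtain ⟨a, hat, has⟩ := Finset.exists_of_ssubset hss
    refine ⟨a, hat, ?_⟩
    have h1 : s ⊆ t.erase a := fun x hx => Finset.mem_erase.mpr ⟨fun h => has (h ▸ hx), hsub hx⟩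
    exact (Finset.eq_of_subset_of_card_le h1
      (by rw [Finset.card_erase_of_mem hat, hcard])).symm
  · intro a _
    rfl

/-- The all-ones matrix. -/
def Jmat (r : ℕ) : Matrix (Fin r) (Fin r) ℚ := Matrix.of fun _ _ => 1

theorem Jmat_mul_Jmat (r : ℕ) : Jmat r * Jmat r = (r : ℚ) • Jmat r := by
  ext k l
  simp [Jmat, Matrix.mul_apply]

theorem det_one_add_Jmat (r : ℕ) : (1 + Jmat r).det = (r : ℚ) + 1 := by
  have h : Jmat r = Matrix.replicateCol Unit (fun _ => (1:ℚ)) * Matrix.replicateRow Unit (fun _ => (1:ℚ)) := by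
    ext k l; simp [Jmat, Matrix.mul_apply]
  rw [h, Matrix.det_one_add_replicateCol_mul_replicateRow]
  simp [dotProduct]
  ring

theorem blk_inv (s : ℚ) (hs : s * s = 1) (r : ℕ) :
    (s • (1 + Jmat r)) * (s • (1 - (((r:ℚ)+1))⁻¹ • Jmat r)) = 1 := by
  have hr : ((r:ℚ)+1) ≠ 0 := by positivity
  rw [Matrix.smul_mul, Matrix.mul_smul, smul_smul, hs]
  rw [Matrix.add_mul, Matrix.one_mul, Matrix.mul_sub, Matrix.mul_one, Matrix.mul_smul,
    Jmat_mul_Jmat]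
  rw [smul_smul]
  ext k l
  simp only [Matrix.add_apply, Matrix.sub_apply, Matrix.smul_apply, Matrix.one_apply, smul_eq_mul,
    Jmat, Matrix.of_apply, one_smul]
  field_simp
  ring

variable (n : ℕ) (p : ℕ → ℤ)

/-- Index type of the big block. -/
abbrev SIdx : Type := Σ i : Fin (n - 1), Fin ((p i).natAbs - 1)

/-- The block-diagonal part of `M′`. -/
def Amat : Matrix (SIdx n p) (SIdx n p) ℚ :=
  blockDiagonal' fun i => ((sgn p i : ℤ) : ℚ) • (1 + Jmat ((p i).natAbs - 1))

/-- The inverse of `Amat`. -/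
def Emat : Matrix (SIdx n p) (SIdx n p) ℚ :=
  blockDiagonal' fun i => ((sgn p i : ℤ) : ℚ) •
    (1 - (((((p i).natAbs - 1 : ℕ) : ℚ) + 1))⁻¹ • Jmat ((p i).natAbs - 1))

/-- Column to `γ`. -/
def Bmat : Matrix (SIdx n p) Unit ℚ := Matrix.of fun x _ => ((sgn p x.1 : ℤ) : ℚ)

/-- Row from `γ`. -/
def Cmat : Matrix Unit (SIdx n p) ℚ := Matrix.of fun _ x => ((sgn p x.1 : ℤ) : ℚ)

/-- The `γγ` corner. -/
def Dmat : Matrix Unit Unit ℚ :=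
  Matrix.of fun _ _ => ((∑ i ∈ Finset.range (n - 1), sgn p i : ℤ) : ℚ)

theorem decomp :
    ((linkM n p).submatrix (delδ n p) (delδ n p)).map (Int.cast : ℤ → ℚ) =
      fromBlocks (Amat n p) (Bmat n p) (Cmat n p) (Dmat n p) := by
  ext x y
  rcases x with ⟨i, k⟩ | u <;> rcases y with ⟨j, l⟩ | v
  · show ((linkMf n p (Sum.inl ⟨i, k⟩) (Sum.inl ⟨j, l⟩) : ℤ) : ℚ) = Amat n p ⟨i, k⟩ ⟨j, l⟩
    rcases eq_or_ne i j with h | h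
    · subst h
      simp only [linkMf, Amat, blockDiagonal'_apply, dif_pos rfl, if_pos rfl, cast_eq]
      rcases eq_or_ne (k : ℕ) (l : ℕ) with hk | hk
      · have : k = l := Fin.ext hk
        subst this
        simp [Jmat]
        ring
      · have : k ≠ l := fun h => hk (congrArg Fin.val h)
        simp [hk, Jmat, Matrix.one_apply_ne this]
    · have hij : (i : ℕ) ≠ (j : ℕ) := fun h2 => h (Fin.ext h2)
      simp [linkMf, Amat, blockDiagonal'_apply, hij, h]
  · show ((linkMf n p (Sum.inl ⟨i, k⟩) (Sum.inr 0) : ℤ) : ℚ) = Bmat n p ⟨i, k⟩ v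
    simp [linkMf, Bmat]
  · show ((linkMf n p (Sum.inr 0) (Sum.inl ⟨j, l⟩) : ℤ) : ℚ) = Cmat n p u ⟨j, l⟩
    simp [linkMf, Cmat]
  · show ((linkMf n p (Sum.inr 0) (Sum.inr 0) : ℤ) : ℚ) = Dmat n p u v
    simp [linkMf, Dmat]

theorem AE (hp : ∀ i : Fin (n - 1), p i ≠ 0) : Amat n p * Emat n p = 1 := by
  rw [Amat, Emat, ← blockDiagonal'_mul]
  have : (fun k : Fin (n-1) => ((sgn p k : ℤ) : ℚ) • (1 + Jmat ((p k).natAbs - 1)) *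
      (((sgn p k : ℤ) : ℚ) • (1 - (((((p k).natAbs - 1 : ℕ) : ℚ) + 1))⁻¹ •
        Jmat ((p k).natAbs - 1)))) = fun _ => 1 := by
    funext i
    refine blk_inv _ ?_ _
    have hs := sign_sq (p i) (hp i)
    push_cast [sgn]
    nlinarith [hs]
  rw [this]
  exact blockDiagonal'_one

theorem detA (hodd : ∀ i : Fin (n - 1), Odd (p i)) :
    (Amat n p).det = ∏ i : Fin (n - 1), ((p i).natAbs : ℚ) := by
  rw [Amat, det_blockDiag]
  refine Finset.prod_congr rfl fun i _ => ?_
  have hne : p i ≠ 0 := fun h => by simpa [h] using hodd i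
  have heven : Even ((p i).natAbs - 1) := by
    obtain ⟨k, hk⟩ := Int.natAbs_odd.mpr (hodd i)
    exact ⟨k, by omega⟩
  have h1 : (1 : ℕ) ≤ (p i).natAbs := by
    have := Int.natAbs_pos.mpr hne
    omega
  rw [Matrix.det_smul, det_one_add_Jmat]
  have hpow : ((sgn p i : ℤ) : ℚ) ^ Fintype.card (Fin ((p i).natAbs - 1)) = 1 := by
    rcases int_sign_cases (p i) hne with h | h <;>
      simp [sgn, h, Fintype.card_fin, heven.neg_one_pow]
  rw [hpow, one_mul]
  push_cast [Nat.cast_sub h1]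
  ring

theorem EB (hp : ∀ i : Fin (n - 1), p i ≠ 0) :
    Emat n p * Bmat n p =
      Matrix.of fun x _ => (((p x.1).natAbs : ℚ))⁻¹ := by
  ext ⟨j, l⟩ u
  rw [Matrix.mul_apply, ← Finset.univ_sigma_univ, Finset.sum_sigma]
  rw [Finset.sum_eq_single j]
  · have hs := sign_sq (p j) (hp j)
    have hss : ((sgn p (j:ℕ) : ℤ) : ℚ) * ((sgn p (j:ℕ) : ℤ) : ℚ) = 1 := by
      push_cast [sgn]; nlinarith [hs]
    have h1 : (1 : ℕ) ≤ (p j).natAbs := by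
      have := Int.natAbs_pos.mpr (hp j)
      omega
    have hr : ((((p j).natAbs - 1 : ℕ) : ℚ) + 1) = ((p j).natAbs : ℚ) := by
      push_cast [Nat.cast_sub h1]; ring
    have hrne : (((p j).natAbs : ℚ)) ≠ 0 :=
      Nat.cast_ne_zero.mpr (Int.natAbs_ne_zero.mpr (hp j))
    simp only [Emat, Bmat, blockDiagonal'_apply, Matrix.of_apply, dite_true, cast_eq,
      Matrix.smul_apply, Matrix.sub_apply, smul_eq_mul, Matrix.one_apply, Jmat, mul_one]
    have hterm : ∀ x : Fin ((p (j:ℕ)).natAbs - 1),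
        (↑(sgn p (j:ℕ)) * ((if l = x then (1:ℚ) else 0) -
            ((((p (j:ℕ)).natAbs - 1 : ℕ) : ℚ) + 1)⁻¹)) * ↑(sgn p (j:ℕ)) =
          ((if l = x then (1:ℚ) else 0) - (((p (j:ℕ)).natAbs : ℚ))⁻¹) := by
      intro x
      rw [hr]
      linear_combination ((if l = x then (1:ℚ) else 0) - ((((p (j:ℕ)).natAbs : ℚ)))⁻¹) * hss
    rw [Finset.sum_congr rfl fun x _ => hterm x, Finset.sum_sub_distrib, Finset.sum_ite_eq,
      Finset.sum_const, Finset.card_univ, Fintype.card_fin, if_pos (Finset.mem_univ l),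
      nsmul_eq_mul]
    have hc : (((p (j:ℕ)).natAbs - 1 : ℕ) : ℚ) = ((p (j:ℕ)).natAbs : ℚ) - 1 := by
      linarith [hr]
    rw [hc]
    field_simp
    ring
  · intro i _ hij
    simp [Emat, blockDiagonal'_apply, hij.symm, Matrix.mul_apply]
  · simp

theorem perterm (a : ℤ) (ha : a ≠ 0) :
    ((-(a.sign) : ℤ) : ℚ) - ((a.natAbs - 1 : ℕ) : ℚ) * ((-(a.sign) : ℤ) : ℚ) *
      ((a.natAbs : ℚ))⁻¹ = -((a : ℚ))⁻¹ := by
  have habs := natAbs_eq_sign_mul a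
  have hsq := sign_sq a ha
  have h1 : (1 : ℕ) ≤ a.natAbs := by
    have := Int.natAbs_pos.mpr ha
    omega
  have hc : ((a.natAbs - 1 : ℕ) : ℚ) = (a.natAbs : ℚ) - 1 := by
    push_cast [Nat.cast_sub h1]; ring
  have hane : (a : ℚ) ≠ 0 := Int.cast_ne_zero.mpr ha
  have hNne : ((a.natAbs : ℚ)) ≠ 0 := Nat.cast_ne_zero.mpr (Int.natAbs_ne_zero.mpr ha)
  rw [hc]
  push_cast
  field_simp
  nlinarith [habs, hsq]

theorem schur (hp : ∀ i : Fin (n - 1), p i ≠ 0) :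
    Dmat n p - Cmat n p * Emat n p * Bmat n p =
      Matrix.of fun _ _ => ∑ j : Fin (n - 1), -((p j : ℚ))⁻¹ := by
  rw [Matrix.mul_assoc, EB n p hp]
  ext u v
  simp only [Matrix.sub_apply, Dmat, Matrix.of_apply, Matrix.mul_apply]
  rw [← Finset.univ_sigma_univ, Finset.sum_sigma]
  push_cast
  rw [Finset.sum_range fun i => ((sgn p i : ℤ) : ℚ)]
  rw [← Finset.sum_sub_distrib]
  refine Finset.sum_congr rfl fun j _ => ?_
  rw [Cmat]
  simp only [Matrix.of_apply, Finset.sum_const, Finset.card_univ, Fintype.card_fin,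
    nsmul_eq_mul]
  have := perterm (p j) (hp j)
  push_cast [sgn] at this ⊢
  linarith [this]

end Aux

/-- For `M′` the matrix obtained from `M` by deleting the row and column indexed
by `δ`: `det M′ = −sign(p₁⋯p_{n−1})·σ_{n−2}(p₁,…,p_{n−1})
               = −sign(p₁⋯p_{n−1})·Σ_{i=1}^{n−1} ∏_{j≤n−1, j≠i} p_j`. -/
theorem stmt11 (n : ℕ) (hn : 3 ≤ n) (hodd : Odd n) (p : ℕ → ℤ)
    (hpodd : ∀ i, i < n - 1 → Odd (p i)) (hpeven : Even (p (n - 1)))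
    (hpne : p (n - 1) ≠ 0) :
    ((linkM n p).submatrix (delδ n p) (delδ n p)).det =
        -(∏ i ∈ Finset.range (n - 1), p i).sign * esym p 0 (n - 1) (n - 2) ∧
      ((linkM n p).submatrix (delδ n p) (delδ n p)).det =
        -(∏ i ∈ Finset.range (n - 1), p i).sign *
          ∑ i ∈ Finset.range (n - 1), ∏ j ∈ (Finset.range (n - 1)).erase i, p j := by
  have hp : ∀ i : Fin (n - 1), p i ≠ 0 := by
    intro i h
    have ho := hpodd i i.2
    rw [h] at ho
    exact (Int.not_odd_iff_even.mpr Even.zero) ho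
  have hp' : ∀ i, i < n - 1 → p i ≠ 0 := fun i hi => hp ⟨i, hi⟩
  have hAE := AE n p hp
  have hEA := mul_eq_one_comm.mp hAE
  letI : Invertible (Amat n p) := ⟨Emat n p, hEA, hAE⟩
  have key : ((((linkM n p).submatrix (delδ n p) (delδ n p)).det : ℤ) : ℚ) =
      (∏ i : Fin (n - 1), ((p i).natAbs : ℚ)) * (∑ j : Fin (n - 1), -((p j : ℚ))⁻¹) := by
    have h0 := RingHom.map_det (Int.castRingHom ℚ) ((linkM n p).submatrix (delδ n p) (delδ n p))
    rw [RingHom.mapMatrix_apply] at h0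
    have h1 : ((linkM n p).submatrix (delδ n p) (delδ n p)).map ⇑(Int.castRingHom ℚ) =
        fromBlocks (Amat n p) (Bmat n p) (Cmat n p) (Dmat n p) := by
      rw [show ⇑(Int.castRingHom ℚ) = (Int.cast : ℤ → ℚ) from rfl]
      exact decomp n p
    rw [show (Int.castRingHom ℚ) ((linkM n p).submatrix (delδ n p) (delδ n p)).det =
      ((((linkM n p).submatrix (delδ n p) (delδ n p)).det : ℤ) : ℚ) from rfl] at h0
    rw [h0, h1, Matrix.det_fromBlocks₁₁, detA n p (fun i => hpodd i i.2),
      show ⅟(Amat n p) = Emat n p from rfl, schur n p hp]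
    congr 1
    rw [Matrix.det_unique]
    rfl
  have hsum2 : ((linkM n p).submatrix (delδ n p) (delδ n p)).det =
      -(∏ i ∈ Finset.range (n - 1), p i).sign *
        ∑ i ∈ Finset.range (n - 1), ∏ j ∈ (Finset.range (n - 1)).erase i, p j := by
    have final : (∏ i : Fin (n - 1), ((p i).natAbs : ℚ)) * (∑ j : Fin (n - 1), -((p j : ℚ))⁻¹) =
        ((-(∏ i ∈ Finset.range (n - 1), p i).sign *
          ∑ i ∈ Finset.range (n - 1), ∏ j ∈ (Finset.range (n - 1)).erase i, p j : ℤ) : ℚ) := by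
      rw [← Finset.prod_range fun i => ((p i).natAbs : ℚ),
        ← Finset.sum_range fun j => -((p j : ℚ))⁻¹]
      have hsign : (∏ i ∈ Finset.range (n - 1), ((p i).natAbs : ℚ)) =
          (((∏ i ∈ Finset.range (n - 1), p i).sign : ℤ) : ℚ) *
            ((∏ i ∈ Finset.range (n - 1), p i : ℤ) : ℚ) := by
        calc (∏ i ∈ Finset.range (n - 1), ((p i).natAbs : ℚ))
            = ∏ i ∈ Finset.range (n - 1), |((p i : ℤ) : ℚ)| := by
              refine Finset.prod_congr rfl fun i _ => ?_
              rw [Nat.cast_natAbs]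
              exact Int.cast_abs
          _ = |∏ i ∈ Finset.range (n - 1), ((p i : ℤ) : ℚ)| := (Finset.abs_prod _ _).symm
          _ = |((∏ i ∈ Finset.range (n - 1), p i : ℤ) : ℚ)| := by push_cast; rfl
          _ = (((∏ i ∈ Finset.range (n - 1), p i).natAbs : ℕ) : ℚ) := by
              rw [Nat.cast_natAbs]
              exact Int.cast_abs.symm
          _ = _ := natAbs_eq_sign_mul _
      rw [hsign]
      push_cast
      rw [mul_assoc, Finset.mul_sum]
      have hterm : ∀ j ∈ Finset.range (n - 1),
          (∏ i ∈ Finset.range (n - 1), ((p i : ℤ) : ℚ)) * -((p j : ℚ))⁻¹ =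
            -(∏ i ∈ (Finset.range (n - 1)).erase j, ((p i : ℤ) : ℚ)) := by
        intro j hj
        have hprod := Finset.prod_erase_mul (Finset.range (n - 1)) (fun i => ((p i : ℤ) : ℚ)) hj
        have hjne : ((p j : ℤ) : ℚ) ≠ 0 :=
          Int.cast_ne_zero.mpr (hp' j (Finset.mem_range.mp hj))
        field_simp
        linarith [hprod]
      rw [Finset.sum_congr rfl hterm, Finset.sum_neg_distrib]
      ring
    have := key.trans final
    exact_mod_cast this
  refine ⟨?_, hsum2⟩
  rw [hsum2]
  congr 1
  have hne : (Finset.range (n - 1)).Nonempty := by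
    rw [Finset.nonempty_range_iff]
    omega
  have : esym p 0 (n - 1) (n - 2) =
      ∑ i ∈ Finset.range (n - 1), ∏ j ∈ (Finset.range (n - 1)).erase i, p j := by
    rw [esym, ← Finset.range_eq_Ico]
    have hc : n - 2 = (Finset.range (n - 1)).card - 1 := by
      rw [Finset.card_range]
      omega
    rw [hc]
    exact sum_powersetCard_pred hne p
  rw [this]
end

section
/- The complex polynomial z⁶ − 2z⁵ − z⁴ + 5z³ − z² − 2z + 1 has no root of absolute value 1; that is, for every z ∈ ℂ with |z| = 1 one has z⁶ − 2z⁵ − z⁴ + 5z³ − z² − 2z + 1 ≠ 0. -/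
/-- The polynomial `z⁶ − 2z⁵ − z⁴ + 5z³ − z² − 2z + 1` (which is `z³·Δ(z)` for the
Alexander polynomial `Δ` of the pretzel knot `P(5,−3,8)`) has no root on the unit
circle. -/
theorem stmt16 (z : ℂ) (hz : ‖z‖ = 1) :
    z ^ 6 - 2 * z ^ 5 - z ^ 4 + 5 * z ^ 3 - z ^ 2 - 2 * z + 1 ≠ 0 := by
  intro h
  set a := z.re with ha
  set b := z.im with hb
  have hnorm : a ^ 2 + b ^ 2 = 1 := by
    have := Complex.normSq_eq_norm_sq z
    simp [Complex.normSq_apply, hz] at this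
    nlinarith [this]
  simp only [Complex.ext_iff, pow_succ, pow_zero, one_mul, Complex.mul_re, Complex.mul_im,
    Complex.add_re, Complex.add_im, Complex.sub_re, Complex.sub_im, Complex.one_re,
    Complex.one_im, Complex.zero_re, Complex.zero_im, Complex.re_ofNat, Complex.im_ofNat,
    ← ha, ← hb] at h
  obtain ⟨h1, h2⟩ := h
  have key : 8 * a ^ 3 - 8 * a ^ 2 - 8 * a + 9 = 0 := by
    linear_combination (a ^ 3 - 3 * a * b ^ 2) * h1 + (3 * a ^ 2 * b - b ^ 3) * h2
      - (9 + 9 * b ^ 2 + 7 * b ^ 4 + 2 * b ^ 6 - 8 * a - 5 * a * b ^ 2 - 4 * a * b ^ 4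
        - 3 * a * b ^ 6 + a ^ 2 + 10 * a ^ 2 * b ^ 2 + 2 * a ^ 2 * b ^ 4 - a ^ 3
        - 4 * a ^ 3 * b ^ 2 - 5 * a ^ 3 * b ^ 4 + 3 * a ^ 4 - 2 * a ^ 4 * b ^ 2
        - a ^ 5 * b ^ 2 - 2 * a ^ 6 + a ^ 7) * hnorm
  nlinarith [key, hnorm, sq_nonneg (a - 1), sq_nonneg b, sq_nonneg (a + 1)]
end

section
/- There is no polynomial f ∈ ℤ[X] such that f · reverse(f) = X⁶ − 2X⁵ − X⁴ + 5X³ − X² − 2X + 1, where reverse(f) denotes the reversed polynomial X^{deg f} · f(1/X) (the polynomial whose coefficients are those of f in reverse order). Equivalently, the Laurent polynomial t³ − 2t² − t + 5 − t⁻¹ − 2t⁻² + t⁻³ cannot be written as f(t)·f(t⁻¹) for any f ∈ ℤ[t, t⁻¹]. -/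
open Polynomial

/-- There is no `f ∈ ℤ[X]` with `f · reverse(f) = X⁶ − 2X⁵ − X⁴ + 5X³ − X² − 2X + 1`,
i.e. the Alexander polynomial `Δ(t) = t³ − 2t² − t + 5 − t⁻¹ − 2t⁻² + t⁻³` of the
pretzel knot `P(5,−3,8)` cannot be written as `f(t)·f(t⁻¹)` over `ℤ[t,t⁻¹]`. -/
theorem stmt17 :
    ¬ ∃ f : Polynomial ℤ,
        f * f.reverse =
          X ^ 6 - 2 * X ^ 5 - X ^ 4 + 5 * X ^ 3 - X ^ 2 - 2 * X + 1 := by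
  rintro ⟨f, hf⟩
  have hc0 : (f * f.reverse).coeff 0 = 1 := by
    rw [hf]; simp [coeff_one, coeff_X]
  rw [mul_coeff_zero, coeff_zero_reverse] at hc0
  have hf0 : f.coeff 0 ≠ 0 := by
    intro h; rw [h, zero_mul] at hc0; exact one_ne_zero hc0.symm
  have hfne : f ≠ 0 := fun h => hf0 (by simp [h])
  have htd : f.natTrailingDegree = 0 := by
    rw [natTrailingDegree_eq_zero]; exact Or.inr hf0
  have hdeg : f.natDegree = 3 := by
    have h6 : (f * f.reverse).natDegree = 6 := by
      rw [hf]; compute_degree!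
    rw [natDegree_mul hfne (reverse_eq_zero.not.mpr hfne), reverse_natDegree, htd] at h6
    omega
  have hc3 : (f * f.reverse).coeff 3 = 5 := by
    rw [hf]; simp [coeff_one, coeff_X]
  rw [coeff_mul, Finset.Nat.sum_antidiagonal_eq_sum_range_succ_mk] at hc3
  simp only [Finset.sum_range_succ, Finset.sum_range_zero, coeff_reverse, hdeg] at hc3
  rw [show revAt 3 (3 - 0) = 0 by decide, show revAt 3 (3 - 1) = 1 by decide,
    show revAt 3 (3 - 2) = 2 by decide, show revAt 3 (3 - 3) = 3 by decide] at hc3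
  rw [leadingCoeff, hdeg] at hc0
  have hbc : f.coeff 1 * f.coeff 1 + f.coeff 2 * f.coeff 2 = 3 := by
    rcases Int.mul_eq_one_iff_eq_one_or_neg_one.mp hc0 with ⟨h1, h2⟩ | ⟨h1, h2⟩ <;>
      rw [h1, h2] at hc3 <;> linarith
  have key : ∀ x y : ZMod 4, x * x + y * y ≠ 3 := by decide
  exact key (f.coeff 1 : ZMod 4) (f.coeff 2 : ZMod 4)
    (by exact_mod_cast congrArg (Int.cast : ℤ → ZMod 4) hbc)
end

section
/- The polynomial X⁶ − 2X⁵ − X⁴ + 5X³ − X² − 2X + 1 is irreducible in ℚ[X]. -/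
open Polynomial

private instance fact7 : Fact (Nat.Prime 7) := ⟨by norm_num⟩
private instance fact2 : Fact (Nat.Prime 2) := ⟨by norm_num⟩

private noncomputable def Fz : ℤ[X] := X ^ 6 - 2 * X ^ 5 - X ^ 4 + 5 * X ^ 3 - X ^ 2 - 2 * X + 1

private lemma Fz_monic : Fz.Monic := by unfold Fz; monicity!

private lemma Fz_natDegree : Fz.natDegree = 6 := by unfold Fz; compute_degree!

private lemma roots_zero_of_no_root {K : Type*} [Field K] {p : K[X]} (hp : p ≠ 0)
    (h : ∀ a : K, ¬ p.IsRoot a) : p.roots = 0 := by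
  rw [Multiset.eq_zero_iff_forall_notMem]
  intro a ha
  exact h a ((mem_roots hp).mp ha)

private lemma c1_monic : (X ^ 3 + 2 * X ^ 2 - X + 2 : (ZMod 7)[X]).Monic := by monicity!
private lemma c2_monic : (X ^ 3 + 3 * X ^ 2 + X + 4 : (ZMod 7)[X]).Monic := by monicity!

private lemma c1_deg : (X ^ 3 + 2 * X ^ 2 - X + 2 : (ZMod 7)[X]).natDegree = 3 := by
  compute_degree!
private lemma c2_deg : (X ^ 3 + 3 * X ^ 2 + X + 4 : (ZMod 7)[X]).natDegree = 3 := by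
  compute_degree!

private lemma c1_irred : Irreducible (X ^ 3 + 2 * X ^ 2 - X + 2 : (ZMod 7)[X]) := by
  rw [c1_monic.irreducible_iff_roots_eq_zero_of_degree_le_three (by rw [c1_deg]; norm_num)
    (by rw [c1_deg])]
  refine roots_zero_of_no_root c1_monic.ne_zero fun a ha => ?_
  simp only [IsRoot, eval_add, eval_sub, eval_mul, eval_pow, eval_X, eval_ofNat] at ha
  fin_cases a <;> revert ha <;> decide

private lemma c2_irred : Irreducible (X ^ 3 + 3 * X ^ 2 + X + 4 : (ZMod 7)[X]) := by
  rw [c2_monic.irreducible_iff_roots_eq_zero_of_degree_le_three (by rw [c2_deg]; norm_num)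
    (by rw [c2_deg])]
  refine roots_zero_of_no_root c2_monic.ne_zero fun a ha => ?_
  simp only [IsRoot, eval_add, eval_mul, eval_pow, eval_X, eval_ofNat] at ha
  fin_cases a <;> revert ha <;> decide

/-- factorization of `Fz` mod 7 into two irreducible cubics -/
private lemma F7_eq : Fz.map (Int.castRingHom (ZMod 7)) =
    (X ^ 3 + 2 * X ^ 2 - X + 2) * (X ^ 3 + 3 * X ^ 2 + X + 4) := by
  have hz : Fz = (X ^ 3 + 2 * X ^ 2 - X + 2) * (X ^ 3 + 3 * X ^ 2 + X + 4)
      + 7 * (-X ^ 5 - X ^ 4 - 2 * X ^ 2 - 1) := by unfold Fz; ring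
  have h7 : (7 : (ZMod 7)[X]) = 0 := by
    have : ((7 : ℕ) : (ZMod 7)[X]) = 0 := CharP.cast_eq_zero _ 7
    simpa using this
  rw [hz]
  push_cast [Polynomial.map_add, Polynomial.map_mul, Polynomial.map_pow, Polynomial.map_ofNat,
    Polynomial.map_neg, Polynomial.map_sub, map_X, Polynomial.map_one, h7]
  ring

/-- factorization of `Fz` mod 2 -/
private lemma F2_eq : Fz.map (Int.castRingHom (ZMod 2)) =
    (X ^ 2 + X + 1) * (X ^ 4 + X ^ 3 + X ^ 2 + X + 1) := by
  have hz : Fz = (X ^ 2 + X + 1) * (X ^ 4 + X ^ 3 + X ^ 2 + X + 1)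
      + 2 * (-2 * X ^ 5 - 2 * X ^ 4 + X ^ 3 - 2 * X ^ 2 - 2 * X) := by unfold Fz; ring
  have h2 : (2 : (ZMod 2)[X]) = 0 := by
    have : ((2 : ℕ) : (ZMod 2)[X]) = 0 := CharP.cast_eq_zero _ 2
    simpa using this
  rw [hz]
  push_cast [Polynomial.map_add, Polynomial.map_mul, Polynomial.map_pow, Polynomial.map_ofNat,
    Polynomial.map_neg, Polynomial.map_sub, map_X, Polynomial.map_one, h2]
  ring

private lemma F2_noroot (a : ZMod 2) :
    ¬ ((X ^ 2 + X + 1) * (X ^ 4 + X ^ 3 + X ^ 2 + X + 1) : (ZMod 2)[X]).IsRoot a := by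
  intro ha
  simp only [IsRoot, eval_mul, eval_add, eval_pow, eval_X, eval_one] at ha
  fin_cases a <;> revert ha <;> decide

/-- no monic factor of degree 1 or 2 (via mod 7) -/
private lemma no_deg12 (g : ℤ[X]) (hm : g.Monic) (hdvd : g ∣ Fz) (h1 : 1 ≤ g.natDegree)
    (h2 : g.natDegree ≤ 2) : False := by
  set φ := Int.castRingHom (ZMod 7)
  have hgm : (g.map φ).Monic := hm.map φ
  have hgd : (g.map φ).natDegree = g.natDegree := hm.natDegree_map φ
  have hgne : g.map φ ≠ 0 := hgm.ne_zero
  have hgnu : ¬ IsUnit (g.map φ) := by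
    intro hu
    have := natDegree_eq_zero_of_isUnit hu
    omega
  obtain ⟨r, hr, hrg⟩ := WfDvdMonoid.exists_irreducible_factor hgnu hgne
  have hrF : r ∣ (X ^ 3 + 2 * X ^ 2 - X + 2) * (X ^ 3 + 3 * X ^ 2 + X + 4 : (ZMod 7)[X]) := by
    rw [← F7_eq]
    exact hrg.trans (Polynomial.map_dvd φ hdvd)
  have hrprime : Prime r := UniqueFactorizationMonoid.irreducible_iff_prime.mp hr
  have hrdeg : r.natDegree ≤ 2 := by
    have := Polynomial.natDegree_le_of_dvd hrg hgne
    omega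
  rcases hrprime.2.2 _ _ hrF with h | h
  · have hassoc := hr.associated_of_dvd c1_irred h
    have h3 : (X ^ 3 + 2 * X ^ 2 - X + 2 : (ZMod 7)[X]).natDegree ≤ r.natDegree :=
      Polynomial.natDegree_le_of_dvd hassoc.symm.dvd hr.ne_zero
    rw [c1_deg] at h3; omega
  · have hassoc := hr.associated_of_dvd c2_irred h
    have h3 : (X ^ 3 + 3 * X ^ 2 + X + 4 : (ZMod 7)[X]).natDegree ≤ r.natDegree :=
      Polynomial.natDegree_le_of_dvd hassoc.symm.dvd hr.ne_zero
    rw [c2_deg] at h3; omega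

/-- no monic factor of degree 3 (via mod 2) -/
private lemma no_deg3 (g : ℤ[X]) (hm : g.Monic) (hdvd : g ∣ Fz) (h3 : g.natDegree = 3) :
    False := by
  set φ := Int.castRingHom (ZMod 2)
  set q : (ZMod 2)[X] := g.map φ with hq
  have hqm : q.Monic := hm.map φ
  have hqd : q.natDegree = 3 := by rw [hq, hm.natDegree_map φ, h3]
  have hqF : q ∣ (X ^ 2 + X + 1) * (X ^ 4 + X ^ 3 + X ^ 2 + X + 1 : (ZMod 2)[X]) := by
    rw [← F2_eq]; exact Polynomial.map_dvd φ hdvd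
  obtain ⟨t, ht⟩ := id hqF
  -- q has no roots, hence q is irreducible
  have hqirr : Irreducible q := by
    rw [hqm.irreducible_iff_roots_eq_zero_of_degree_le_three (by omega) (by omega)]
    refine roots_zero_of_no_root hqm.ne_zero fun a ha => ?_
    refine F2_noroot a ?_
    rw [ht]
    simp [IsRoot.def] at ha ⊢
    left; exact ha
  have hqprime : Prime q := UniqueFactorizationMonoid.irreducible_iff_prime.mp hqirr
  have hq2ne : (X ^ 2 + X + 1 : (ZMod 2)[X]) ≠ 0 := by
    have : (X ^ 2 + X + 1 : (ZMod 2)[X]).Monic := by monicity!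
    exact this.ne_zero
  have hq4m : (X ^ 4 + X ^ 3 + X ^ 2 + X + 1 : (ZMod 2)[X]).Monic := by monicity!
  have hq2d : (X ^ 2 + X + 1 : (ZMod 2)[X]).natDegree = 2 := by compute_degree!
  have hq4d : (X ^ 4 + X ^ 3 + X ^ 2 + X + 1 : (ZMod 2)[X]).natDegree = 4 := by compute_degree!
  rcases hqprime.2.2 _ _ hqF with h | h
  · have := Polynomial.natDegree_le_of_dvd h hq2ne
    omega
  · -- q divides the quartic; the cofactor is linear hence has a root, contradiction
    obtain ⟨s, hs⟩ := h
    have hs0 : s ≠ 0 := by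
      intro h0; rw [h0, mul_zero] at hs; exact hq4m.ne_zero hs
    have hsm : s.Monic := by
      have := hq4m
      rw [hs] at this
      exact hqm.of_mul_monic_left this
    have hsd : s.natDegree = 1 := by
      have := Polynomial.natDegree_mul hqm.ne_zero hs0
      rw [← hs, hq4d, hqd] at this
      omega
    have hseval : s.IsRoot (-s.coeff 0) := by
      rw [hsm.eq_X_add_C hsd]
      simp [IsRoot]
      exact CharTwo.add_self_eq_zero _
    refine F2_noroot (-s.coeff 0) ?_
    simp only [IsRoot, eval_mul]
    rw [hs]
    simp only [eval_mul]
    rw [hseval]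
    ring

private lemma Fz_irred : Irreducible Fz := by
  constructor
  · intro hu
    have := natDegree_eq_zero_of_isUnit hu
    rw [Fz_natDegree] at this
    omega
  · intro a b hab
    by_contra hcon
    push_neg at hcon
    obtain ⟨ha, hb⟩ := hcon
    have hF0 : Fz ≠ 0 := Fz_monic.ne_zero
    have ha0 : a ≠ 0 := fun h => hF0 (by rw [hab, h, zero_mul])
    have hb0 : b ≠ 0 := fun h => hF0 (by rw [hab, h, mul_zero])
    have hdeg : a.natDegree + b.natDegree = 6 := by
      rw [← natDegree_mul ha0 hb0, ← hab, Fz_natDegree]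
    have hlc : a.leadingCoeff * b.leadingCoeff = 1 := by
      rw [← leadingCoeff_mul, ← hab]; exact Fz_monic
    have key : ∀ u v : ℤ[X], u.Monic → v.Monic → Fz = u * v → u.natDegree + v.natDegree = 6 →
        1 ≤ u.natDegree → 1 ≤ v.natDegree → False := by
      intro u v hu hv huv hd h1u h1v
      rcases le_or_gt u.natDegree 3 with h | h
      · rcases Nat.lt_or_ge u.natDegree 3 with h' | h'
        · exact no_deg12 u hu (Dvd.intro _ huv.symm) h1u (by omega)
        · exact no_deg3 u hu (Dvd.intro _ huv.symm) (by omega)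
      · exact no_deg12 v hv (Dvd.intro_left _ huv.symm) h1v (by omega)
    have hA1 : 1 ≤ a.natDegree := by
      by_contra h
      push_neg at h
      apply ha
      have hcz : a = C (a.coeff 0) := Polynomial.eq_C_of_natDegree_eq_zero (by omega)
      have hulc : IsUnit a.leadingCoeff := IsUnit.of_mul_eq_one _ hlc
      rw [Polynomial.leadingCoeff, (by omega : a.natDegree = 0)] at hulc
      rw [hcz]
      exact (Polynomial.isUnit_C).mpr hulc
    have hB1 : 1 ≤ b.natDegree := by
      by_contra h
      push_neg at h
      apply hb
      have hcz : b = C (b.coeff 0) := Polynomial.eq_C_of_natDegree_eq_zero (by omega)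
      have hulc : IsUnit b.leadingCoeff := IsUnit.of_mul_eq_one _ (by rw [mul_comm] at hlc; exact hlc)
      rw [Polynomial.leadingCoeff, (by omega : b.natDegree = 0)] at hulc
      rw [hcz]
      exact (Polynomial.isUnit_C).mpr hulc
    rcases Int.isUnit_iff.mp (IsUnit.of_mul_eq_one _ hlc) with h1 | h1
    · have hbm : b.leadingCoeff = 1 := by rw [h1, one_mul] at hlc; exact hlc
      exact key a b h1 hbm hab hdeg hA1 hB1
    · have hbm : b.leadingCoeff = -1 := by
        rw [h1] at hlc; omega
      have ham' : (-a).Monic := by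
        unfold Monic
        rw [leadingCoeff_neg, h1, neg_neg]
      have hbm' : (-b).Monic := by
        unfold Monic
        rw [leadingCoeff_neg, hbm, neg_neg]
      refine key (-a) (-b) ham' hbm' (by rw [neg_mul_neg]; exact hab) ?_ ?_ ?_ <;>
        simp only [natDegree_neg] <;> omega

/-- The polynomial `X⁶ − 2X⁵ − X⁴ + 5X³ − X² − 2X + 1` is irreducible over `ℚ`. -/
theorem stmt18 :
    Irreducible
      (X ^ 6 - 2 * X ^ 5 - X ^ 4 + 5 * X ^ 3 - X ^ 2 - 2 * X + 1 : Polynomial ℚ) := by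
  have hmap : Fz.map (algebraMap ℤ ℚ) =
      (X ^ 6 - 2 * X ^ 5 - X ^ 4 + 5 * X ^ 3 - X ^ 2 - 2 * X + 1 : Polynomial ℚ) := by
    unfold Fz
    push_cast [Polynomial.map_add, Polynomial.map_mul, Polynomial.map_pow, Polynomial.map_ofNat,
      Polynomial.map_sub, map_X, Polynomial.map_one]
    ring
  rw [← hmap]
  exact (Fz_monic.irreducible_iff_irreducible_map_fraction_map (K := ℚ)).mp Fz_irred
end
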